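/- arXiv:math/0602436 — 5 statements merged into one kernel-verified Lean document; each statement's English description precedes it below -/
import Mathlib

section
/- Let Γ be a simple graph of order n and let μ be the algebraic connectivity of Γ (the second smallest eigenvalue of the Laplacian matrix of Γ). Then every strong defensive alliance S in Γ satisfies |S| ≥ ⌈n(μ+1)/(n+μ)⌉; in particular the strong defensive alliance number satisfies â(Γ) ≥ ⌈n(μ+1)/(n+μ)⌉. -/
open Finset SimpleGraph

/-- `μ` is the second smallest (counted with multiplicity) value of the family `e`. -/
def IsSecondSmallest {ι : Type*} (e : ι → ℝ) (μ : ℝ) : Prop :=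
  ∃ i₀ i₁ : ι, i₀ ≠ i₁ ∧ e i₀ ≤ μ ∧ e i₁ = μ ∧ ∀ j : ι, j ≠ i₀ → μ ≤ e j

/-- `lam` is the largest value of the family `e`. -/
def IsLargest {ι : Type*} (e : ι → ℝ) (lam : ℝ) : Prop :=
  (∃ i : ι, e i = lam) ∧ ∀ i : ι, e i ≤ lam

/-!
Test the Laplacian `L` on `x = n • 𝟙_S - |S| • 𝟙`, which is orthogonal to the constant vector
`𝟙 ∈ ker L`. When `μ > 0` all eigenvectors but one have eigenvalue `≥ μ > 0`, hence are orthogonal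
to `𝟙`; so `𝟙` is a multiple of the remaining one, `x` has no component along it, and
`μ ‖x‖² ≤ xᵀ L x`. This reads `μ |S| (n - |S|) ≤ n e(S, V ∖ S)`.
In a strong defensive alliance each vertex of `S` has at most `|S| - 1` neighbours outside `S`,
so `e(S, V ∖ S) ≤ |S| (|S| - 1)`, and dividing by `|S|` gives `n (μ + 1) ≤ |S| (n + μ)`.
-/

open Matrix

namespace Matrix.IsHermitian

variable {V : Type*} [Fintype V] [DecidableEq V] {A : Matrix V V ℝ}

lemma dotProduct_eq_sum_eigenvectorBasis (hA : A.IsHermitian) (x y : V → ℝ) :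
    x ⬝ᵥ y = ∑ j, (⇑(hA.eigenvectorBasis j) ⬝ᵥ x) * (⇑(hA.eigenvectorBasis j) ⬝ᵥ y) := by
  have := hA.eigenvectorBasis.sum_inner_mul_inner (WithLp.toLp 2 x) (WithLp.toLp 2 y)
  simp only [EuclideanSpace.inner_eq_star_dotProduct, star_trivial] at this
  simpa [dotProduct_comm] using this.symm

lemma eigenvectorBasis_dotProduct_mulVec (hA : A.IsHermitian) (j : V) (x : V → ℝ) :
    ⇑(hA.eigenvectorBasis j) ⬝ᵥ (A *ᵥ x) = hA.eigenvalues j * (⇑(hA.eigenvectorBasis j) ⬝ᵥ x) := by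
  rw [dotProduct_mulVec, ← mulVec_transpose, ← conjTranspose_eq_transpose_of_trivial, hA.eq,
    hA.mulVec_eigenvectorBasis, smul_dotProduct, smul_eq_mul]

lemma mul_dotProduct_self_le_dotProduct_mulVec (hA : A.IsHermitian) {w : V → ℝ}
    (hw : A *ᵥ w = 0) (hw0 : w ≠ 0) {μ : ℝ} (hμ : 0 < μ) {i₀ : V}
    (hge : ∀ j ≠ i₀, μ ≤ hA.eigenvalues j) {x : V → ℝ} (hx : w ⬝ᵥ x = 0) :
    μ * (x ⬝ᵥ x) ≤ x ⬝ᵥ (A *ᵥ x) := by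
  have hw_perp : ∀ j ≠ i₀, ⇑(hA.eigenvectorBasis j) ⬝ᵥ w = 0 := fun j hj ↦ by
    have h := hA.eigenvectorBasis_dotProduct_mulVec j w
    rw [hw, dotProduct_zero, eq_comm, mul_eq_zero] at h
    exact h.resolve_left (hμ.trans_le (hge j hj)).ne'
  -- `w` is a multiple of the `i₀`-th eigenvector
  have hw_dot : ∀ y, w ⬝ᵥ y =
      (⇑(hA.eigenvectorBasis i₀) ⬝ᵥ w) * (⇑(hA.eigenvectorBasis i₀) ⬝ᵥ y) := fun y ↦ by
    rw [hA.dotProduct_eq_sum_eigenvectorBasis, sum_eq_single i₀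
      (fun j _ hj ↦ by rw [hw_perp j hj, zero_mul]) (by simp)]
  have hx_perp : ⇑(hA.eigenvectorBasis i₀) ⬝ᵥ x = 0 := by
    refine (mul_eq_zero.mp ((hw_dot x).symm.trans hx)).resolve_left fun h ↦ hw0 ?_
    exact dotProduct_self_eq_zero.mp (by rw [hw_dot, h, zero_mul])
  rw [hA.dotProduct_eq_sum_eigenvectorBasis, hA.dotProduct_eq_sum_eigenvectorBasis x, mul_sum]
  refine sum_le_sum fun j _ ↦ ?_
  rw [hA.eigenvectorBasis_dotProduct_mulVec]
  obtain rfl | hj := eq_or_ne j i₀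
  · simp [hx_perp]
  · nlinarith [hge j hj, mul_self_nonneg (⇑(hA.eigenvectorBasis j) ⬝ᵥ x)]

end Matrix.IsHermitian

namespace SimpleGraph

variable {V : Type*} [Fintype V] [DecidableEq V] (G : SimpleGraph V) [DecidableRel G.Adj]

def cutSize (S : Finset V) : ℕ := ∑ v ∈ S, #(G.neighborFinset v \ S)

lemma lapMatrix_mulVec_indicator_of_mem {R : Type*} [CommRing R] {S : Finset V} {v : V}
    (hv : v ∈ S) :
    (G.lapMatrix R *ᵥ fun u ↦ if u ∈ S then 1 else 0) v = #(G.neighborFinset v \ S) := by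
  rw [lapMatrix_mulVec_apply, sum_ite_mem, sum_const, nsmul_one, if_pos hv, mul_one,
    ← card_neighborFinset_eq_degree, ← card_sdiff_add_card_inter (G.neighborFinset v) S]
  push_cast
  ring

lemma indicator_dotProduct_lapMatrix_mulVec {R : Type*} [CommRing R] (S : Finset V) :
    (fun u ↦ if u ∈ S then 1 else 0) ⬝ᵥ (G.lapMatrix R *ᵥ fun u ↦ if u ∈ S then 1 else 0) =
      (G.cutSize S : R) := by
  simp only [dotProduct, ite_mul, one_mul, zero_mul, sum_ite_mem, univ_inter, cutSize, Nat.cast_sum]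
  exact sum_congr rfl fun v hv ↦ G.lapMatrix_mulVec_indicator_of_mem hv

lemma const_dotProduct_lapMatrix_mulVec {R : Type*} [CommRing R] (x : V → R) :
    (fun _ ↦ 1) ⬝ᵥ (G.lapMatrix R *ᵥ x) = 0 := by
  rw [dotProduct_mulVec, ← mulVec_transpose, G.isSymm_lapMatrix R, lapMatrix_mulVec_const_eq_zero,
    zero_dotProduct]

theorem mul_card_mul_card_compl_le_cutSize (hL : (G.lapMatrix ℝ).IsHermitian) {μ : ℝ} {i₀ : V}
    (hge : ∀ j ≠ i₀, μ ≤ hL.eigenvalues j) (S : Finset V) :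
    μ * (#S * (Fintype.card V - #S)) ≤ Fintype.card V * G.cutSize S := by
  have hsn : (#S : ℝ) ≤ Fintype.card V := by exact_mod_cast S.card_le_univ
  rcases le_or_gt μ 0 with hμ | hμ
  · exact (mul_nonpos_of_nonpos_of_nonneg hμ (by nlinarith)).trans (by positivity)
  obtain rfl | ⟨v, hv⟩ := S.eq_empty_or_nonempty
  · simp only [card_empty, Nat.cast_zero, zero_mul, mul_zero]
    positivity
  set n : ℝ := ((Fintype.card V : ℕ) : ℝ)
  set s : ℝ := ((#S : ℕ) : ℝ)
  set y : V → ℝ := fun u ↦ if u ∈ S then 1 else 0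
  set one : V → ℝ := fun _ ↦ 1
  set x := n • y - s • one
  have hone : one ≠ 0 := Function.ne_iff.mpr ⟨v, one_ne_zero⟩
  have hx_perp : one ⬝ᵥ x = 0 := by
    simp only [dotProduct, Pi.sub_apply, Pi.smul_apply, smul_eq_mul, mul_ite, mul_one, mul_zero,
      one_mul, sum_sub_distrib, sum_ite_mem, univ_inter, sum_const, nsmul_eq_mul, card_univ, one,
      x, y]
    ring
  have hx_norm : x ⬝ᵥ x = n * (s * (n - s)) := by
    simp only [dotProduct, Pi.sub_apply, Pi.smul_apply, smul_eq_mul, mul_ite, mul_one, mul_zero,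
      mul_sub, sub_mul, ite_mul, zero_mul, sum_sub_distrib, sum_ite_mem, univ_inter, inter_self,
      sum_const, nsmul_eq_mul, card_univ, x, y, one]
    ring
  have hx_lap : x ⬝ᵥ (G.lapMatrix ℝ *ᵥ x) = n * (n * G.cutSize S) := by
    have hLx : G.lapMatrix ℝ *ᵥ x = n • (G.lapMatrix ℝ *ᵥ y) := by
      rw [mulVec_sub, mulVec_smul, mulVec_smul, lapMatrix_mulVec_const_eq_zero, smul_zero,
        sub_zero]
    rw [hLx, dotProduct_smul, sub_dotProduct, smul_dotProduct, smul_dotProduct,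
      indicator_dotProduct_lapMatrix_mulVec, const_dotProduct_lapMatrix_mulVec]
    simp only [smul_eq_mul, mul_zero, sub_zero]
  have hn : 0 < n := by
    have : Nonempty V := ⟨v⟩
    exact Nat.cast_pos.mpr Fintype.card_pos
  have h := hL.mul_dotProduct_self_le_dotProduct_mulVec G.lapMatrix_mulVec_const_eq_zero hone hμ
    hge hx_perp
  rw [hx_norm, hx_lap, mul_left_comm] at h
  exact le_of_mul_le_mul_left h hn

lemma cutSize_le_of_forall_card_sdiff_le {S : Finset V}
    (h : ∀ v ∈ S, #(G.neighborFinset v \ S) ≤ #(G.neighborFinset v ∩ S)) :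
    G.cutSize S ≤ #S * (#S - 1) := by
  refine (sum_le_card_nsmul S _ _ fun v hv ↦ (h v hv).trans ?_).trans_eq (smul_eq_mul ..)
  rw [← card_erase_of_mem hv]
  exact card_le_card fun u hu ↦ mem_erase.mpr
    ⟨(G.ne_of_adj ((G.mem_neighborFinset v u).mp (mem_inter.mp hu).1)).symm, (mem_inter.mp hu).2⟩

end SimpleGraph

theorem stmt_1 {V : Type*} [Fintype V] [DecidableEq V]
    (G : SimpleGraph V) [DecidableRel G.Adj]
    (n : ℕ) (hn : Fintype.card V = n)
    (mu : ℝ)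
    (hmu : ∃ hL : (G.lapMatrix ℝ).IsHermitian, IsSecondSmallest hL.eigenvalues mu)
    (S : Finset V) (hS : S.Nonempty)
    (hdef : ∀ v ∈ S, (G.neighborFinset v \ S).card ≤ (G.neighborFinset v ∩ S).card)
    :
    ⌈(n : ℝ) * (mu + 1) / ((n : ℝ) + mu)⌉ ≤ (S.card : ℤ) := by
  obtain ⟨hL, i₀, i₁, -, -, rfl, hge⟩ := hmu
  subst hn
  have hμ : 0 ≤ hL.eigenvalues i₁ := (G.posSemidef_lapMatrix ℝ).eigenvalues_nonneg i₁
  have hs : 1 ≤ #S := card_pos.mpr hS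
  have hsn : (#S : ℝ) ≤ Fintype.card V := by exact_mod_cast S.card_le_univ
  have hcut : (G.cutSize S : ℝ) ≤ #S * (#S - 1) := by
    have h := Nat.cast_le (α := ℝ) |>.mpr (G.cutSize_le_of_forall_card_sdiff_le hdef)
    rwa [Nat.cast_mul, Nat.cast_sub hs, Nat.cast_one] at h
  have hbound := (G.mul_card_mul_card_compl_le_cutSize hL hge S).trans
    (mul_le_mul_of_nonneg_left hcut (Nat.cast_nonneg _))
  have hs' : (1 : ℝ) ≤ #S := by exact_mod_cast hs
  rw [Int.ceil_le, div_le_iff₀ (by linarith)]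
  push_cast
  refine le_of_mul_le_mul_left ?_ (zero_lt_one.trans_le hs')
  linarith
end

section
/- Let Γ be a simple graph of order n and let λ be the spectral radius of Γ (the largest eigenvalue of the adjacency matrix of Γ). Then every global strong defensive alliance S in Γ satisfies |S| ≥ ⌈n/(λ+1)⌉; in particular the global strong defensive alliance number satisfies γ_â(Γ) ≥ ⌈n/(λ+1)⌉. -/
open Finset SimpleGraph

/-!
Let `x` be the indicator vector of `S`. Every vertex outside `S` has a neighbour in `S`, and every
vertex of `S` has at most as many neighbours outside `S` as inside, so
`n - |S| ≤ ∑_{u ∈ S} |N(u) \ S| ≤ ∑_{u ∈ S} |N(u) ∩ S| = xᵀ A x ≤ λ |S|`,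
the last step being the Rayleigh bound for the adjacency matrix `A`. Hence `n ≤ (λ + 1) |S|`.
-/

open Matrix

/-- Rayleigh bound: `λ • 1 - A` is positive semidefinite, its eigenvalues being `λ - λᵢ`. -/
theorem Matrix.IsHermitian.dotProduct_mulVec_le {n : Type*} [Fintype n] [DecidableEq n]
    {A : Matrix n n ℝ} (hA : A.IsHermitian) {lam : ℝ} (hlam : ∀ i, hA.eigenvalues i ≤ lam)
    (x : n → ℝ) : x ⬝ᵥ (A *ᵥ x) ≤ lam * (x ⬝ᵥ x) := by
  have hB : (algebraMap ℝ (Matrix n n ℝ) lam - A).IsHermitian :=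
    (isHermitian_diagonal fun _ => lam).sub hA
  have hpsd : (algebraMap ℝ (Matrix n n ℝ) lam - A).PosSemidef := by
    rw [hB.posSemidef_iff_eigenvalues_nonneg]
    intro i
    have hi := hB.eigenvalues_mem_spectrum_real i
    rw [← spectrum.singleton_sub_eq, hA.spectrum_real_eq_range_eigenvalues] at hi
    obtain ⟨_, rfl, _, ⟨j, rfl⟩, hj⟩ := hi
    simpa [← hj] using hlam j
  have hquad := hpsd.dotProduct_mulVec_nonneg x
  simp only [star_trivial, Algebra.algebraMap_eq_smul_one, sub_mulVec, smul_mulVec, one_mulVec,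
    dotProduct_sub, dotProduct_smul, smul_eq_mul, sub_nonneg] at hquad
  exact hquad

theorem Int.ceil_div_le_of_le_mul {K : Type*} [Field K] [LinearOrder K] [IsStrictOrderedRing K]
    [FloorRing K] {a b : K} {m : ℤ} (ha : 0 ≤ a) (hm : 0 ≤ m) (h : a ≤ b * m) :
    ⌈a / b⌉ ≤ m := by
  rw [Int.ceil_le]
  rcases lt_or_ge 0 b with hb | hb
  · rwa [div_le_iff₀ hb, mul_comm]
  · exact (div_nonpos_of_nonneg_of_nonpos ha hb).trans (Int.cast_nonneg hm)

namespace SimpleGraph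

variable {V : Type*} [Fintype V] [DecidableEq V] (G : SimpleGraph V) [DecidableRel G.Adj]

theorem indicator_dotProduct_adjMatrix_mulVec (S : Finset V) :
    (fun v => if v ∈ S then (1 : ℝ) else 0) ⬝ᵥ (G.adjMatrix ℝ *ᵥ fun v => if v ∈ S then 1 else 0) =
      ∑ u ∈ S, (#(G.neighborFinset u ∩ S) : ℝ) := by
  simp [dotProduct, adjMatrix_mulVec_apply, ite_mul, Finset.sum_ite_mem]

theorem card_compl_le_sum_card_neighborFinset_sdiff {S : Finset V}
    (hdom : ∀ v ∉ S, ∃ u ∈ S, G.Adj v u) : #Sᶜ ≤ ∑ u ∈ S, #(G.neighborFinset u \ S) :=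
  calc #Sᶜ ≤ #(S.biUnion fun u => G.neighborFinset u \ S) := by
        refine card_le_card fun v hv => ?_
        rw [mem_compl] at hv
        obtain ⟨u, hu, hvu⟩ := hdom v hv
        exact mem_biUnion.2 ⟨u, hu, by simp [hvu.symm, hv]⟩
    _ ≤ _ := card_biUnion_le

end SimpleGraph

theorem stmt_4_general {V : Type*} [Fintype V] [DecidableEq V]
    (G : SimpleGraph V) [DecidableRel G.Adj]
    (n : ℕ) (hn : Fintype.card V = n)
    (lam : ℝ)
    (hlam : ∃ hA : (G.adjMatrix ℝ).IsHermitian, IsLargest hA.eigenvalues lam)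
    (S : Finset V)
    (hdef : ∀ v ∈ S, (G.neighborFinset v \ S).card ≤ (G.neighborFinset v ∩ S).card)
    (hglob : ∀ v ∉ S, ∃ u ∈ S, G.Adj v u)
    :
    ⌈(n : ℝ) / (lam + 1)⌉ ≤ (S.card : ℤ) := by
  obtain ⟨hA, -, hle⟩ := hlam
  set x : V → ℝ := fun v => if v ∈ S then 1 else 0
  have hxx : x ⬝ᵥ x = #S := by simp [x, dotProduct, Finset.sum_ite_mem]
  have hinside : ∑ u ∈ S, (#(G.neighborFinset u ∩ S) : ℝ) ≤ lam * #S := by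
    rw [← hxx, ← G.indicator_dotProduct_adjMatrix_mulVec S]
    exact hA.dotProduct_mulVec_le hle x
  have houtside : (#Sᶜ : ℝ) ≤ ∑ u ∈ S, (#(G.neighborFinset u ∩ S) : ℝ) := by
    exact_mod_cast (G.card_compl_le_sum_card_neighborFinset_sdiff hglob).trans (sum_le_sum hdef)
  have hcard : (n : ℝ) = #Sᶜ + #S := by
    rw [← hn, ← card_compl_add_card S, Nat.cast_add]
  refine Int.ceil_div_le_of_le_mul n.cast_nonneg (Int.natCast_nonneg _) ?_
  push_cast
  linarith

theorem stmt_4 {V : Type*} [Fintype V] [DecidableEq V]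
    (G : SimpleGraph V) [DecidableRel G.Adj]
    (n : ℕ) (hn : Fintype.card V = n)
    (lam : ℝ)
    (hlam : ∃ hA : (G.adjMatrix ℝ).IsHermitian, IsLargest hA.eigenvalues lam)
    (S : Finset V) (hS : S.Nonempty)
    (hdef : ∀ v ∈ S, (G.neighborFinset v \ S).card ≤ (G.neighborFinset v ∩ S).card)
    (hglob : ∀ v ∉ S, ∃ u ∈ S, G.Adj v u)
    :
    ⌈(n : ℝ) / (lam + 1)⌉ ≤ (S.card : ℤ) :=
  stmt_4_general G n hn lam hlam S hdef hglob
end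

section
/- Let Γ be a simple graph of order n with minimum degree δ and at least one edge, and let μ* be the Laplacian spectral radius of Γ (the largest eigenvalue of the Laplacian matrix of Γ). Then every global strong offensive alliance S in Γ satisfies |S| ≥ ⌈(n/μ*)·(⌈δ/2⌉+1)⌉; in particular the global strong offensive alliance number satisfies γ_{â_o}(Γ) ≥ ⌈(n/μ*)·(⌈δ/2⌉+1)⌉. -/
open Finset SimpleGraph

/-!
Every vector `x` satisfies `x ⬝ L x ≤ μ* ‖x‖²`. For a vertex set `T`, the test vector
`n • 𝟙_T - |T|` turns this into the cut bound `n · e(T, V ∖ T) ≤ μ* |T| |V ∖ T|`. Applied to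
`T = V ∖ S`, the alliance condition gives every vertex outside `S` at least `⌈δ/2⌉ + 1`
neighbours in `S`, so `e(T, S) ≥ |T| (⌈δ/2⌉ + 1)` and hence `n (⌈δ/2⌉ + 1) ≤ μ* |S|`. When
`S = V` the star around an endpoint `v` of an edge gives `μ* ≥ deg v + 1 ≥ ⌈δ/2⌉ + 1` instead.
-/

open Matrix
open scoped MatrixOrder

theorem Matrix.IsHermitian.dotProduct_mulVec_le_of_eigenvalues_le {V : Type*} [Fintype V]
    [DecidableEq V] {A : Matrix V V ℝ} (hA : A.IsHermitian) {lam : ℝ}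
    (h : ∀ i, hA.eigenvalues i ≤ lam) (x : V → ℝ) :
    x ⬝ᵥ (A *ᵥ x) ≤ lam * (x ⬝ᵥ x) := by
  have hle : A ≤ algebraMap ℝ _ lam := by
    refine le_algebraMap_of_spectrum_le (fun r hr => ?_) hA.isSelfAdjoint
    rw [hA.spectrum_real_eq_range_eigenvalues] at hr
    obtain ⟨i, rfl⟩ := hr
    exact h i
  simpa [sub_mulVec, Algebra.algebraMap_eq_smul_one, smul_mulVec, dotProduct_sub] using
    (Matrix.le_iff.mp hle).dotProduct_mulVec_nonneg x

namespace SimpleGraph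

variable {V : Type*} [Fintype V] [DecidableEq V] (G : SimpleGraph V) [DecidableRel G.Adj]

theorem dotProduct_lapMatrix_mulVec (x : V → ℝ) :
    x ⬝ᵥ (G.lapMatrix ℝ *ᵥ x) = (∑ i, ∑ j, if G.Adj i j then (x i - x j) ^ 2 else 0) / 2 := by
  rw [← toLinearMap₂'_apply', lapMatrix_toLinearMap₂']

theorem dotProduct_lapMatrix_mulVec_eq_sq_mul {x y : V → ℝ} (a : ℝ)
    (hxy : ∀ i j, x i - x j = a * (y i - y j)) :
    x ⬝ᵥ (G.lapMatrix ℝ *ᵥ x) = a ^ 2 * (y ⬝ᵥ (G.lapMatrix ℝ *ᵥ y)) := by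
  simp only [dotProduct_lapMatrix_mulVec, hxy, mul_div_assoc', mul_sum, mul_ite, mul_zero,
    mul_pow]

theorem sum_neighborFinset_sq_sub_le_dotProduct_lapMatrix_mulVec (v : V) (x : V → ℝ) :
    ∑ u ∈ G.neighborFinset v, (x v - x u) ^ 2 ≤ x ⬝ᵥ (G.lapMatrix ℝ *ᵥ x) := by
  set f : V → V → ℝ := fun i j => if G.Adj i j then (x i - x j) ^ 2 else 0
  have hf : ∀ i j, 0 ≤ f i j := fun i j => by positivity
  have hrow : ∑ j, f v j = ∑ u ∈ G.neighborFinset v, (x v - x u) ^ 2 := by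
    simp [f, ← sum_filter, neighborFinset_eq_filter]
  have hcol : ∑ i, f i v ≤ ∑ i ∈ univ.erase v, ∑ j, f i j := by
    rw [← add_sum_erase _ _ (mem_univ v)]
    simp only [f, G.irrefl, if_false, zero_add]
    exact sum_le_sum fun i _ => single_le_sum (fun j _ => hf i j) (mem_univ v)
  have hsymm : ∑ i, f i v = ∑ j, f v j := by
    refine sum_congr rfl fun i _ => ?_
    simp only [f, G.adj_comm i v]
    split_ifs <;> ring
  rw [dotProduct_lapMatrix_mulVec, ← add_sum_erase _ _ (mem_univ v)]
  linarith

theorem degree_add_one_le_of_eigenvalues_le {lam : ℝ} (hL : (G.lapMatrix ℝ).IsHermitian)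
    (h : ∀ i, hL.eigenvalues i ≤ lam) {v : V} (hv : 0 < G.degree v) :
    (G.degree v : ℝ) + 1 ≤ lam := by
  set D : ℝ := (G.degree v : ℝ)
  -- the star at `v` alone already has Rayleigh quotient `D + 1`
  set x : V → ℝ := fun u => if u = v then D else if G.Adj v u then -1 else 0
  have hcut : ∑ u ∈ G.neighborFinset v, (x v - x u) ^ 2 = D * (D + 1) ^ 2 := by
    have : ∀ u ∈ G.neighborFinset v, (x v - x u) ^ 2 = (D + 1) ^ 2 := fun u hu => by
      rw [mem_neighborFinset] at hu
      simp [x, hu, hu.ne']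
    rw [sum_congr rfl this, sum_const, card_neighborFinset_eq_degree, nsmul_eq_mul]
  have hnorm : x ⬝ᵥ x = D * (D + 1) := by
    have : ∀ u, x u * x u = (if u = v then D ^ 2 else 0) + (if G.Adj v u then 1 else 0) := by
      intro u
      by_cases huv : u = v
      · simp only [x, huv, if_true, G.irrefl, if_false, add_zero, sq]
      · by_cases hadj : G.Adj v u <;> simp [x, huv, hadj]
    rw [dotProduct, sum_congr rfl fun u _ => this u, sum_add_distrib, sum_ite_eq', sum_boole,
      ← neighborFinset_eq_filter, card_neighborFinset_eq_degree]
    simp only [mem_univ, if_true]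
    ring
  have hDpos : 0 < D * (D + 1) := by positivity
  have := (G.sum_neighborFinset_sq_sub_le_dotProduct_lapMatrix_mulVec v x).trans
    (hL.dotProduct_mulVec_le_of_eigenvalues_le h x)
  rw [hcut, hnorm] at this
  nlinarith

theorem dotProduct_lapMatrix_mulVec_indicator (T : Finset V) :
    (fun i => if i ∈ T then (1 : ℝ) else 0) ⬝ᵥ
        (G.lapMatrix ℝ *ᵥ fun i => if i ∈ T then (1 : ℝ) else 0) =
      ∑ i ∈ T, (#(G.neighborFinset i \ T) : ℝ) := by
  simp only [dotProduct, lapMatrix_mulVec_apply, ite_mul, one_mul, zero_mul, sum_ite_mem,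
    univ_inter]
  refine sum_congr rfl fun i hi => ?_
  rw [if_pos hi, mul_one, sum_const, nsmul_one, ← card_neighborFinset_eq_degree,
    ← card_sdiff_add_card_inter (G.neighborFinset i) T]
  push_cast
  ring

theorem card_mul_sum_card_sdiff_le {lam : ℝ} (hL : (G.lapMatrix ℝ).IsHermitian)
    (h : ∀ i, hL.eigenvalues i ≤ lam) (T : Finset V) :
    (Fintype.card V : ℝ) * ∑ i ∈ T, (#(G.neighborFinset i \ T) : ℝ) ≤ lam * #T * #Tᶜ := by
  obtain rfl | hT := T.eq_empty_or_nonempty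
  · simp
  set n : ℝ := (Fintype.card V : ℝ)
  set t : ℝ := (#T : ℝ)
  have hn : 0 < n := Nat.cast_pos.mpr (Fintype.card_pos_iff.mpr ⟨hT.choose⟩)
  have hcompl : (#Tᶜ : ℝ) = n - t := by
    rw [card_compl, Nat.cast_sub (card_le_univ T)]
  -- shifting `n • 𝟙_T` by a constant keeps the quadratic form and shrinks the norm
  set x : V → ℝ := fun i => if i ∈ T then n - t else -t
  have hquad : x ⬝ᵥ (G.lapMatrix ℝ *ᵥ x) = n ^ 2 * ∑ i ∈ T, (#(G.neighborFinset i \ T) : ℝ) := by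
    rw [G.dotProduct_lapMatrix_mulVec_eq_sq_mul n (y := fun i => if i ∈ T then 1 else 0),
      dotProduct_lapMatrix_mulVec_indicator]
    intro i j
    simp only [x]
    split_ifs <;> ring
  have hnorm : x ⬝ᵥ x = n * (t * (n - t)) := by
    have hin : ∑ i ∈ T, x i * x i = t * (n - t) ^ 2 := by
      rw [sum_congr rfl fun i hi => (show x i * x i = (n - t) ^ 2 by simp [x, hi, sq]),
        sum_const, nsmul_eq_mul]
    have hout : ∑ i ∈ Tᶜ, x i * x i = (n - t) * t ^ 2 := by
      rw [sum_congr rfl fun i hi => (show x i * x i = t ^ 2 by simp [x, mem_compl.mp hi, sq]),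
        sum_const, nsmul_eq_mul, hcompl]
    rw [dotProduct, ← sum_add_sum_compl T, hin, hout]
    ring
  have := hL.dotProduct_mulVec_le_of_eigenvalues_le h x
  rw [hquad, hnorm] at this
  rw [hcompl]
  nlinarith

theorem ceil_minDegree_div_two_add_one_le_card_inter {S : Finset V} {v : V}
    (hv : #(G.neighborFinset v \ S) + 2 ≤ #(G.neighborFinset v ∩ S)) :
    ((⌈(G.minDegree : ℝ) / 2⌉ : ℤ) : ℝ) + 1 ≤ #(G.neighborFinset v ∩ S) := by
  have hdeg : #(G.neighborFinset v \ S) + #(G.neighborFinset v ∩ S) = G.degree v := by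
    rw [← card_neighborFinset_eq_degree, card_sdiff_add_card_inter]
  have htwice : (G.minDegree : ℝ) + 2 ≤ 2 * #(G.neighborFinset v ∩ S) := by
    have := G.minDegree_le_degree v
    exact_mod_cast (by omega : G.minDegree + 2 ≤ 2 * #(G.neighborFinset v ∩ S))
  have hceil : ⌈(G.minDegree : ℝ) / 2⌉ + 1 ≤ #(G.neighborFinset v ∩ S) := by
    have : ⌈(G.minDegree : ℝ) / 2⌉ ≤ (#(G.neighborFinset v ∩ S) : ℤ) - 1 :=
      Int.ceil_le.mpr (by push_cast; linarith)
    omega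
  exact_mod_cast hceil

theorem card_mul_le_of_le_card_inter {lam : ℝ} (hL : (G.lapMatrix ℝ).IsHermitian)
    (h : ∀ i, hL.eigenvalues i ≤ lam) {S : Finset V} (hS : Sᶜ.Nonempty) {k : ℝ}
    (hk : ∀ v ∉ S, k ≤ #(G.neighborFinset v ∩ S)) :
    Fintype.card V * k ≤ lam * #S := by
  have hcut := G.card_mul_sum_card_sdiff_le hL h Sᶜ
  simp only [sdiff_compl, inf_eq_inter, compl_compl] at hcut
  have hsum : #Sᶜ * k ≤ ∑ i ∈ Sᶜ, (#(G.neighborFinset i ∩ S) : ℝ) := by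
    rw [← nsmul_eq_mul, ← sum_const]
    exact sum_le_sum fun v hv => hk v (mem_compl.mp hv)
  have hpos : (0 : ℝ) < #Sᶜ := by exact_mod_cast hS.card_pos
  have : (Fintype.card V : ℝ) * k * #Sᶜ ≤ lam * #S * #Sᶜ := by
    nlinarith [(Fintype.card V).cast_nonneg (α := ℝ)]
  exact le_of_mul_le_mul_right this hpos

end SimpleGraph

theorem stmt_11_general {V : Type*} [Fintype V] [DecidableEq V]
    (G : SimpleGraph V) [DecidableRel G.Adj]
    (n : ℕ) (hn : Fintype.card V = n)
    (d : ℕ) (hd : G.minDegree = d)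
    (hedge : 0 < G.edgeFinset.card)
    (mus : ℝ)
    (hmus : ∃ hL : (G.lapMatrix ℝ).IsHermitian, IsLargest hL.eigenvalues mus)
    (S : Finset V)
    (hoff : ∀ v ∉ S, (G.neighborFinset v \ S).card + 2 ≤ (G.neighborFinset v ∩ S).card)
    :
    ⌈(n : ℝ) / mus * (((⌈(d : ℝ) / 2⌉ : ℤ) : ℝ) + 1)⌉ ≤ (S.card : ℤ) := by
  subst hn hd
  obtain ⟨hL, -, hle⟩ := hmus
  obtain ⟨v, w, hvw⟩ := G.ne_bot_iff_exists_adj.mp (G.edgeFinset_nonempty.mp (card_pos.mp hedge))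
  have hdeg := G.degree_add_one_le_of_eigenvalues_le hL hle
    ((G.degree_pos_iff_exists_adj v).mpr ⟨w, hvw⟩)
  have hceil : ((⌈(G.minDegree : ℝ) / 2⌉ : ℤ) : ℝ) ≤ G.degree v := by
    have : (G.minDegree : ℝ) ≤ G.degree v := by exact_mod_cast G.minDegree_le_degree v
    exact_mod_cast Int.ceil_le.mpr (by push_cast; linarith)
  have hkey : (Fintype.card V : ℝ) * (⌈(G.minDegree : ℝ) / 2⌉ + 1) ≤ mus * #S := by
    obtain hSc | hSc := Sᶜ.eq_empty_or_nonempty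
    · rw [(compl_eq_empty_iff S).mp hSc, card_univ, mul_comm]
      gcongr
      linarith
    · exact G.card_mul_le_of_le_card_inter hL hle hSc fun u hu =>
        G.ceil_minDegree_div_two_add_one_le_card_inter (hoff u hu)
  have hmus : 0 < mus := by linarith [(G.degree v).cast_nonneg (α := ℝ)]
  rw [Int.ceil_le, div_mul_eq_mul_div, div_le_iff₀ hmus]
  push_cast
  linarith

theorem stmt_11 {V : Type*} [Fintype V] [DecidableEq V]
    (G : SimpleGraph V) [DecidableRel G.Adj]
    (n : ℕ) (hn : Fintype.card V = n)
    (d : ℕ) (hd : G.minDegree = d)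
    (hedge : 0 < G.edgeFinset.card)
    (mus : ℝ)
    (hmus : ∃ hL : (G.lapMatrix ℝ).IsHermitian, IsLargest hL.eigenvalues mus)
    (S : Finset V) (hS : S.Nonempty)
    (hoff : ∀ v ∉ S, (G.neighborFinset v \ S).card + 2 ≤ (G.neighborFinset v ∩ S).card)
    :
    ⌈(n : ℝ) / mus * (((⌈(d : ℝ) / 2⌉ : ℤ) : ℝ) + 1)⌉ ≤ (S.card : ℤ) :=
  stmt_11_general G n hn d hd hedge mus hmus S hoff
end

section
/- Let Γ be a simple graph of order n and size m, and let λ be the spectral radius of Γ (the largest eigenvalue of the adjacency matrix of Γ). Then every global strong dual alliance S in Γ satisfies |S| ≥ ⌈(m+n)/(2λ+1)⌉; in particular the global strong dual alliance number satisfies γ_{â_d}(Γ) ≥ ⌈(m+n)/(2λ+1)⌉. -/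
open Finset SimpleGraph

/-!
Let `a v = |N_S(v)|` and `b v = |N_{V∖S}(v)|`. Summing `a + b = deg` gives `2m`; the defensive
condition bounds the sum over `S` by `2 ∑_S a`, and the offensive condition bounds the sum over
`V ∖ S` by `2 ∑_{V∖S} a - 2|V ∖ S| = 2 ∑_S b - 2|V ∖ S| ≤ 2 ∑_S a - 2|V ∖ S|`, since both
`∑_{V∖S} a` and `∑_S b` count the edges between `S` and `V ∖ S`. Hence `m + n ≤ 2 ∑_S a + |S|`.
Finally `∑_S a = xᵀ A x ≤ λ xᵀ x = λ |S|` for the indicator vector `x` of `S`.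
-/

open Matrix

open scoped MatrixOrder in
theorem Matrix.IsHermitian.dotProduct_mulVec_le_mul_dotProduct {n : Type*} [Fintype n]
    [DecidableEq n] {A : Matrix n n ℝ} (hA : A.IsHermitian) {lam : ℝ}
    (hle : ∀ i, hA.eigenvalues i ≤ lam) (x : n → ℝ) :
    x ⬝ᵥ (A *ᵥ x) ≤ lam * (x ⬝ᵥ x) := by
  have hA_le : A ≤ algebraMap ℝ (Matrix n n ℝ) lam :=
    le_algebraMap_of_spectrum_le fun r hr ↦ by
      obtain ⟨i, rfl⟩ := hA.spectrum_real_eq_range_eigenvalues ▸ hr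
      exact hle i
  simpa only [star_trivial, sub_mulVec, dotProduct_sub, Algebra.algebraMap_eq_smul_one,
    smul_mulVec, one_mulVec, dotProduct_smul, smul_eq_mul, sub_nonneg] using
    (Matrix.le_iff.mp hA_le).dotProduct_mulVec_nonneg x

theorem Finset.indicator_dotProduct_indicator {V α : Type*} [Fintype V] [NonAssocSemiring α]
    (S : Finset V) :
    (S : Set V).indicator 1 ⬝ᵥ (S : Set V).indicator (1 : V → α) = #S := by
  classical
  simp [dotProduct, Set.indicator_apply]

namespace SimpleGraph

variable {V : Type*} [Fintype V] [DecidableEq V] (G : SimpleGraph V) [DecidableRel G.Adj]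

theorem indicator_dotProduct_adjMatrix_mulVec_indicator {α : Type*} [NonAssocSemiring α]
    (S : Finset V) :
    (S : Set V).indicator 1 ⬝ᵥ (G.adjMatrix α *ᵥ (S : Set V).indicator 1) =
      ∑ v ∈ S, #(G.neighborFinset v ∩ S) := by
  simp [dotProduct, adjMatrix_mulVec_apply, Set.indicator_apply, sum_ite_mem]

theorem sum_card_neighborFinset_inter_comm (s t : Finset V) :
    ∑ v ∈ s, #(G.neighborFinset v ∩ t) = ∑ w ∈ t, #(G.neighborFinset w ∩ s) := by
  have h (v : V) (u : Finset V) : G.neighborFinset v ∩ u = u.filter (G.Adj v) := by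
    ext; simp [and_comm]
  simp only [h]
  refine (sum_card_bipartiteAbove_eq_sum_card_bipartiteBelow G.Adj).trans ?_
  refine sum_congr rfl fun w _ ↦ ?_
  simp only [bipartiteBelow, G.adj_comm]

theorem card_edgeFinset_add_card_le {S : Finset V}
    (hdef : ∀ v ∈ S, #(G.neighborFinset v \ S) ≤ #(G.neighborFinset v ∩ S))
    (hoff : ∀ v ∉ S, #(G.neighborFinset v \ S) + 2 ≤ #(G.neighborFinset v ∩ S)) :
    #G.edgeFinset + Fintype.card V ≤ 2 * ∑ v ∈ S, #(G.neighborFinset v ∩ S) + #S := by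
  have hdeg : ∑ v, (#(G.neighborFinset v ∩ S) + #(G.neighborFinset v \ S)) =
      2 * #G.edgeFinset := by
    simp only [card_inter_add_card_sdiff, card_neighborFinset_eq_degree]
    exact G.sum_degrees_eq_twice_card_edges
  have hcross : ∑ v ∈ Sᶜ, #(G.neighborFinset v ∩ S) = ∑ v ∈ S, #(G.neighborFinset v \ S) := by
    simpa only [← sdiff_eq_inter_compl] using G.sum_card_neighborFinset_inter_comm Sᶜ S
  have hin : ∑ v ∈ S, #(G.neighborFinset v \ S) ≤ ∑ v ∈ S, #(G.neighborFinset v ∩ S) :=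
    sum_le_sum hdef
  have hout : ∑ v ∈ Sᶜ, (#(G.neighborFinset v \ S) + 2) ≤
      ∑ v ∈ Sᶜ, #(G.neighborFinset v ∩ S) :=
    sum_le_sum fun v hv ↦ hoff v (mem_compl.mp hv)
  rw [sum_add_distrib, sum_const, smul_eq_mul] at hout
  rw [← sum_add_sum_compl S, sum_add_distrib, sum_add_distrib] at hdeg
  have hcard := card_add_card_compl S
  omega

theorem card_edgeFinset_add_card_le_mul_card (hA : (G.adjMatrix ℝ).IsHermitian) {lam : ℝ}
    (hle : ∀ i, hA.eigenvalues i ≤ lam) {S : Finset V}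
    (hdef : ∀ v ∈ S, #(G.neighborFinset v \ S) ≤ #(G.neighborFinset v ∩ S))
    (hoff : ∀ v ∉ S, #(G.neighborFinset v \ S) + 2 ≤ #(G.neighborFinset v ∩ S)) :
    (#G.edgeFinset + Fintype.card V : ℝ) ≤ (2 * lam + 1) * #S := by
  have hrayleigh := hA.dotProduct_mulVec_le_mul_dotProduct hle ((S : Set V).indicator 1)
  rw [indicator_dotProduct_adjMatrix_mulVec_indicator, indicator_dotProduct_indicator]
    at hrayleigh
  have hcount : (#G.edgeFinset + Fintype.card V : ℝ) ≤
      2 * ∑ v ∈ S, #(G.neighborFinset v ∩ S) + #S := by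
    exact_mod_cast G.card_edgeFinset_add_card_le hdef hoff
  push_cast at hrayleigh hcount
  linarith

end SimpleGraph

theorem stmt_15_general {V : Type*} [Fintype V] [DecidableEq V]
    (G : SimpleGraph V) [DecidableRel G.Adj]
    (n : ℕ) (hn : Fintype.card V = n)
    (m : ℕ) (hm : G.edgeFinset.card = m)
    (lam : ℝ)
    (hlam : ∃ hA : (G.adjMatrix ℝ).IsHermitian, IsLargest hA.eigenvalues lam)
    (S : Finset V)
    (hdef : ∀ v ∈ S, (G.neighborFinset v \ S).card ≤ (G.neighborFinset v ∩ S).card)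
    (hoff : ∀ v ∉ S, (G.neighborFinset v \ S).card + 2 ≤ (G.neighborFinset v ∩ S).card)
    :
    ⌈((m : ℝ) + n) / (2 * lam + 1)⌉ ≤ (S.card : ℤ) := by
  obtain ⟨hA, -, hle⟩ := hlam
  have hbound := G.card_edgeFinset_add_card_le_mul_card hA hle hdef hoff
  rw [hm, hn] at hbound
  rw [Int.ceil_le, Int.cast_natCast]
  rcases le_or_gt (2 * lam + 1) 0 with hneg | hpos
  · exact (div_nonpos_of_nonneg_of_nonpos (by positivity) hneg).trans (Nat.cast_nonneg _)
  · rwa [div_le_iff₀ hpos, mul_comm]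

theorem stmt_15 {V : Type*} [Fintype V] [DecidableEq V]
    (G : SimpleGraph V) [DecidableRel G.Adj]
    (n : ℕ) (hn : Fintype.card V = n)
    (m : ℕ) (hm : G.edgeFinset.card = m)
    (lam : ℝ)
    (hlam : ∃ hA : (G.adjMatrix ℝ).IsHermitian, IsLargest hA.eigenvalues lam)
    (S : Finset V) (hS : S.Nonempty)
    (hdef : ∀ v ∈ S, (G.neighborFinset v \ S).card ≤ (G.neighborFinset v ∩ S).card)
    (hoff : ∀ v ∉ S, (G.neighborFinset v \ S).card + 2 ≤ (G.neighborFinset v ∩ S).card)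
    :
    ⌈((m : ℝ) + n) / (2 * lam + 1)⌉ ≤ (S.card : ℤ) :=
  stmt_15_general G n hn m hm lam hlam S hdef hoff
end

section
/- Let Γ be a simple graph of order n and size m. Then every global dual alliance S in Γ satisfies |S| ≥ ⌈√(2m+n)/2⌉; in particular the global dual alliance number satisfies γ_{a_d}(Γ) ≥ ⌈√(2m+n)/2⌉. -/
/-!
Add one to every degree. At a vertex outside `S` the offensive condition gives
`deg v + 1 ≤ 2 |N(v) ∩ S|`; at a vertex of `S` the defensive condition gives
`deg v + 1 ≤ 2 |N(v) ∩ S| + 2`. Summing, and double counting the edges into `S`,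
`2m + n ≤ 2 ∑_v |N(v) ∩ S| + 2|S| = 2 ∑_{u ∈ S} (deg u + 1)`. Since `|N(u) ∩ S| < |S|` for `u ∈ S`,
the defensive condition also gives `deg u + 1 ≤ 2|S|`, hence `2m + n ≤ 4|S|²`.
-/

open Finset SimpleGraph

namespace SimpleGraph

variable {V : Type*} [Fintype V] [DecidableEq V] (G : SimpleGraph V) [DecidableRel G.Adj]

def IsDefensiveAlliance (S : Finset V) : Prop :=
  ∀ v ∈ S, #(G.neighborFinset v \ S) ≤ #(G.neighborFinset v ∩ S) + 1

def IsGlobalOffensiveAlliance (S : Finset V) : Prop :=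
  ∀ v ∉ S, #(G.neighborFinset v \ S) + 1 ≤ #(G.neighborFinset v ∩ S)

theorem degree_eq_card_inter_add_card_sdiff (S : Finset V) (v : V) :
    G.degree v = #(G.neighborFinset v ∩ S) + #(G.neighborFinset v \ S) :=
  (card_inter_add_card_sdiff _ _).symm

theorem card_neighborFinset_inter_lt {S : Finset V} {v : V} (hv : v ∈ S) :
    #(G.neighborFinset v ∩ S) < #S :=
  card_lt_card ⟨inter_subset_right,
    fun h => G.notMem_neighborFinset_self v (inter_subset_left (h hv))⟩

theorem sum_card_neighborFinset_inter (S : Finset V) :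
    ∑ v, #(G.neighborFinset v ∩ S) = ∑ u ∈ S, G.degree u := by
  convert sum_card_bipartiteAbove_eq_sum_card_bipartiteBelow (s := univ) (t := S) (r := G.Adj)
    using 2 with v _ u _
  · congr 1; ext; simp [bipartiteAbove, and_comm]
  · rw [← card_neighborFinset_eq_degree]; congr 1; ext; simp [bipartiteBelow, adj_comm]

variable {G} {S : Finset V}

theorem IsDefensiveAlliance.degree_add_one_le (h : G.IsDefensiveAlliance S) {v : V}
    (hv : v ∈ S) : G.degree v + 1 ≤ 2 * #S := by
  have := h v hv
  have := G.card_neighborFinset_inter_lt hv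
  rw [G.degree_eq_card_inter_add_card_sdiff S]
  omega

theorem sum_degree_add_one_le (hdef : G.IsDefensiveAlliance S)
    (hoff : G.IsGlobalOffensiveAlliance S) :
    ∑ v, (G.degree v + 1) ≤ 2 * ∑ v, #(G.neighborFinset v ∩ S) + 2 * #S := by
  calc ∑ v, (G.degree v + 1)
      ≤ ∑ v, (2 * #(G.neighborFinset v ∩ S) + 2 * if v ∈ S then 1 else 0) := by
        refine sum_le_sum fun v _ => ?_
        rw [G.degree_eq_card_inter_add_card_sdiff S]
        split_ifs with hv
        · have := hdef v hv; omega
        · have := hoff v hv; omega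
    _ = 2 * ∑ v, #(G.neighborFinset v ∩ S) + 2 * #S := by
        rw [sum_add_distrib, ← mul_sum, ← mul_sum, sum_boole, filter_univ_mem, Nat.cast_id]

theorem two_mul_card_edgeFinset_add_card_le (hdef : G.IsDefensiveAlliance S)
    (hoff : G.IsGlobalOffensiveAlliance S) :
    2 * #G.edgeFinset + Fintype.card V ≤ (2 * #S) ^ 2 :=
  calc 2 * #G.edgeFinset + Fintype.card V = ∑ v, (G.degree v + 1) := by
        rw [sum_add_distrib, sum_degrees_eq_twice_card_edges, sum_const, card_univ, smul_eq_mul,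
          mul_one]
    _ ≤ 2 * ∑ v, #(G.neighborFinset v ∩ S) + 2 * #S := sum_degree_add_one_le hdef hoff
    _ = 2 * ∑ u ∈ S, (G.degree u + 1) := by
        rw [sum_card_neighborFinset_inter, sum_add_distrib, sum_const, smul_eq_mul, mul_one,
          mul_add]
    _ ≤ 2 * ∑ _u ∈ S, 2 * #S := by gcongr with u hu; exact hdef.degree_add_one_le hu
    _ = (2 * #S) ^ 2 := by rw [sum_const, smul_eq_mul]; ring

end SimpleGraph

theorem ceil_sqrt_div_two_le_of_le_sq {x : ℝ} {s : ℕ} (h : x ≤ (2 * s : ℝ) ^ 2) :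
    ⌈Real.sqrt x / 2⌉ ≤ (s : ℤ) := by
  rw [Int.ceil_le, div_le_iff₀ two_pos, Int.cast_natCast, Real.sqrt_le_left (by positivity)]
  linarith

theorem stmt_16_general {V : Type*} [Fintype V] [DecidableEq V]
    (G : SimpleGraph V) [DecidableRel G.Adj]
    (n : ℕ) (hn : Fintype.card V = n)
    (m : ℕ) (hm : G.edgeFinset.card = m)
    (S : Finset V)
    (hdef : ∀ v ∈ S, (G.neighborFinset v \ S).card ≤ (G.neighborFinset v ∩ S).card + 1)
    (hoff : ∀ v ∉ S, (G.neighborFinset v \ S).card + 1 ≤ (G.neighborFinset v ∩ S).card)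
    :
    ⌈Real.sqrt (2 * (m : ℝ) + n) / 2⌉ ≤ (S.card : ℤ) := by
  subst hn hm
  exact ceil_sqrt_div_two_le_of_le_sq <| by
    exact_mod_cast G.two_mul_card_edgeFinset_add_card_le hdef hoff

theorem stmt_16 {V : Type*} [Fintype V] [DecidableEq V]
    (G : SimpleGraph V) [DecidableRel G.Adj]
    (n : ℕ) (hn : Fintype.card V = n)
    (m : ℕ) (hm : G.edgeFinset.card = m)
    (S : Finset V) (hS : S.Nonempty)
    (hdef : ∀ v ∈ S, (G.neighborFinset v \ S).card ≤ (G.neighborFinset v ∩ S).card + 1)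
    (hoff : ∀ v ∉ S, (G.neighborFinset v \ S).card + 1 ≤ (G.neighborFinset v ∩ S).card)
    :
    ⌈Real.sqrt (2 * (m : ℝ) + n) / 2⌉ ≤ (S.card : ℤ) :=
  stmt_16_general G n hn m hm S hdef hoff
end
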